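/- arXiv:2104.01326 — 4 statements merged into one kernel-verified Lean document; each statement's English description precedes it below -/
import Mathlib

section
/- Let M be a maximum matching in a bipartite graph G and suppose request r is unmatched in M. Let G' be a subgraph of G (on the same vertex set) containing M. Then in G' there is no matching that matches r together with all requests matched by M. Consequently, if matching previously matched requests is strictly prioritized, r remains unmatched in any priority-optimal matching of G'. -/
/-- A matching: finite, pairwise vertex-disjoint set of edges of `E`. -/
def IsMatching {R V : Type*} (E : R → V → Prop) (M : Finset (R × V)) : Prop :=
  (∀ p ∈ M, E p.1 p.2) ∧
  (∀ p ∈ M, ∀ q ∈ M, p ≠ q → p.1 ≠ q.1 ∧ p.2 ≠ q.2)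

/-- Request `a` is covered (matched) by matching `M`. -/
def Covered {R V : Type*} (M : Finset (R × V)) (a : R) : Prop := ∃ v, (a, v) ∈ M

/-!
A matching covering `r` and every request covered by `M` covers `|M| + 1` requests, hence has
more than `|M|` edges, and it is a matching of `G` because `E' ⊆ E`; this contradicts the
maximality of `M`. For the priority-optimal `M'`: since `M` is itself a matching of `G'`, `M'`
covers at least as many `M`-covered requests as `M` does, i.e. all of them, so covering `r` as
well is excluded by the first part.
-/

section

variable {R V : Type*}

theorem IsMatching.mono {E E' : R → V → Prop} {M : Finset (R × V)}
    (hEE' : ∀ a v, E a v → E' a v) (hM : IsMatching E M) : IsMatching E' M :=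
  ⟨fun p hp => hEE' p.1 p.2 (hM.1 p hp), hM.2⟩

theorem setOf_covered_eq_image (M : Finset (R × V)) :
    {a | Covered M a} = Prod.fst '' (M : Set (R × V)) := by
  ext a
  constructor
  · rintro ⟨v, hv⟩
    exact ⟨(a, v), hv, rfl⟩
  · rintro ⟨p, hp, rfl⟩
    exact ⟨p.2, hp⟩

theorem finite_setOf_covered (M : Finset (R × V)) : {a | Covered M a}.Finite := by
  rw [setOf_covered_eq_image]
  exact M.finite_toSet.image _

theorem IsMatching.ncard_setOf_covered {E : R → V → Prop} {M : Finset (R × V)}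
    (hM : IsMatching E M) : {a | Covered M a}.ncard = M.card := by
  have hinj : Set.InjOn Prod.fst (M : Set (R × V)) := fun p hp q hq hpq =>
    by_contra fun hne => (hM.2 p hp q hq hne).1 hpq
  rw [setOf_covered_eq_image, hinj.ncard_image, Set.ncard_coe_finset]

theorem IsMatching.card_lt_of_covers {E E' : R → V → Prop} {M M' : Finset (R × V)}
    (hM : IsMatching E M) (hM' : IsMatching E' M') {r : R} (hr : ¬ Covered M r)
    (hrM' : Covered M' r) (hcov : ∀ a, Covered M a → Covered M' a) :
    M.card < M'.card := by
  have hsub : insert r {a | Covered M a} ⊆ {a | Covered M' a} :=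
    Set.insert_subset hrM' hcov
  have hle := Set.ncard_le_ncard hsub (finite_setOf_covered M')
  rw [Set.ncard_insert_of_notMem (s := {a | Covered M a}) hr (finite_setOf_covered M),
    hM.ncard_setOf_covered, hM'.ncard_setOf_covered] at hle
  exact hle

theorem forall_covered_of_ncard_setOf_covered_le {M M' : Finset (R × V)}
    (h : {a | Covered M a}.ncard ≤ {a | Covered M a ∧ Covered M' a}.ncard) :
    ∀ a, Covered M a → Covered M' a := by
  have heq : {a | Covered M a ∧ Covered M' a} = {a | Covered M a} :=
    Set.eq_of_subset_of_ncard_le (fun _ ha => ha.1) h (finite_setOf_covered M)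
  exact fun a ha => (heq.ge ha).2

end

theorem unmatched_stays_unmatched_general
    {R V : Type*}
    (E E' : R → V → Prop)                -- edge sets of G and G'
    (M : Finset (R × V))
    (hM : IsMatching E M)
    (hmax : ∀ M' : Finset (R × V), IsMatching E M' → M'.card ≤ M.card)
    (r : R) (hr : ¬ Covered M r)
    (hME' : ∀ p ∈ M, E' p.1 p.2)         -- M ⊆ E'
    (hE'E : ∀ a v, E' a v → E a v)       -- E' ⊆ E
    :
    (¬ ∃ M' : Finset (R × V), IsMatching E' M' ∧ Covered M' r ∧
        ∀ a, Covered M a → Covered M' a) ∧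
    (∀ M' : Finset (R × V),
      IsMatching E' M' →
      -- M' maximizes the number of M-covered requests it covers:
      (∀ M'' : Finset (R × V), IsMatching E' M'' →
        {a | Covered M a ∧ Covered M'' a}.ncard ≤ {a | Covered M a ∧ Covered M' a}.ncard) →
      -- and subject to that, the total number of covered requests:
      (∀ M'' : Finset (R × V), IsMatching E' M'' →
        {a | Covered M a ∧ Covered M'' a}.ncard = {a | Covered M a ∧ Covered M' a}.ncard →
        {a | Covered M'' a}.ncard ≤ {a | Covered M' a}.ncard) →
      ¬ Covered M' r) := by
  have no_extension : ¬ ∃ M' : Finset (R × V), IsMatching E' M' ∧ Covered M' r ∧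
      ∀ a, Covered M a → Covered M' a := by
    rintro ⟨M', hM', hrM', hcov⟩
    exact (hM.card_lt_of_covers hM' hr hrM' hcov).not_ge (hmax M' (hM'.mono hE'E))
  refine ⟨no_extension, fun M' hM' hopt _ hrM' => no_extension ⟨M', hM', hrM', ?_⟩⟩
  have hM_E' : IsMatching E' M := ⟨hME', hM.2⟩
  apply forall_covered_of_ncard_setOf_covered_le
  simpa only [and_self] using hopt M hM_E'

/-- if `M` is a maximum matching of `G` not covering `r`, and
`G' ⊇ M` is a subgraph of `G`, then `G'` has no matching covering `r`
together with all `M`-covered requests; consequently, any priority-optimal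
matching of `G'` (maximize coverage of `M`-covered requests first, then total
coverage) leaves `r` unmatched. -/
theorem unmatched_stays_unmatched
    {R V : Type*} [Fintype R] [Fintype V]
    (E E' : R → V → Prop)                -- edge sets of G and G'
    (M : Finset (R × V))
    (hM : IsMatching E M)
    (hmax : ∀ M' : Finset (R × V), IsMatching E M' → M'.card ≤ M.card)
    (r : R) (hr : ¬ Covered M r)
    (hME' : ∀ p ∈ M, E' p.1 p.2)         -- M ⊆ E'
    (hE'E : ∀ a v, E' a v → E a v)       -- E' ⊆ E
    :
    (¬ ∃ M' : Finset (R × V), IsMatching E' M' ∧ Covered M' r ∧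
        ∀ a, Covered M a → Covered M' a) ∧
    (∀ M' : Finset (R × V),
      IsMatching E' M' →
      -- M' maximizes the number of M-covered requests it covers:
      (∀ M'' : Finset (R × V), IsMatching E' M'' →
        {a | Covered M a ∧ Covered M'' a}.ncard ≤ {a | Covered M a ∧ Covered M' a}.ncard) →
      -- and subject to that, the total number of covered requests:
      (∀ M'' : Finset (R × V), IsMatching E' M'' →
        {a | Covered M a ∧ Covered M'' a}.ncard = {a | Covered M a ∧ Covered M' a}.ncard →
        {a | Covered M'' a}.ncard ≤ {a | Covered M' a}.ncard) →
      ¬ Covered M' r) :=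
  unmatched_stays_unmatched_general E E' M hM hmax r hr hME' hE'E
end

section
/- Suppose at time t an optimal priority assignment B^A(t) covers every previously-assigned request and does not cover request r, and every assignment covering r fails to cover some previously-assigned request covered by B^A(t). If the penalty P⁺ for dropping a previously-assigned request strictly exceeds the maximum possible gain P⁻·|R| + osc(g) from assigning additional new requests and improving routing cost, then no optimal assignment at any later time t' covers r, provided B^A(t) remains feasible at t' and the hypothesis 'for every feasible assignment B covering r at t' there exists r' ∈ B^A(t) with r' ∉ B' holds. -/
/-- if the penalty `P⁺` for dropping a previously-assigned request
strictly exceeds the maximum possible gain `P⁻·|R| + osc(g)`, and every feasible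
assignment at `t'` covering `r` drops some previously-assigned request covered
by `B^A(t)` (which is still feasible at `t'`), then no optimal assignment at
`t'` covers `r`. -/
theorem no_optimal_assignment_covers_r
    {ι Req : Type*} [Fintype Req]
    (Z : Set ι)                    -- feasible assignments at time t'
    (cov : ι → Set Req)            -- requests covered by an assignment
    (prevA newR : Set Req)         -- previously-assigned and new requests
    (hpart : prevA ∪ newR = Set.univ) (hdisj : prevA ∩ newR = ∅)
    (g : ι → ℝ) (osc : ℝ)
    (hosc : ∀ z ∈ Z, ∀ z' ∈ Z, g z - g z' ≤ osc)
    (Pp Pm : ℝ) (hPm : 0 < Pm)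
    (hPp : Pm * (Fintype.card Req : ℝ) + osc < Pp)
    (f : ι → ℝ)
    (hf : ∀ z, f z = Pp * ((prevA \ cov z).ncard : ℝ)
                   + Pm * ((newR \ cov z).ncard : ℝ) + g z)
    (BA : ι) (hBA : BA ∈ Z)                    -- B^A(t) is still feasible at t'
    (r : Req) (hrnew : r ∈ newR)
    (hBAr : r ∉ cov BA)
    (hBAcov : prevA ⊆ cov BA)                  -- B^A(t) covers every previously-assigned request
    (hblock : ∀ z ∈ Z, r ∈ cov z → ∃ r' ∈ prevA ∩ cov BA, r' ∉ cov z) :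
    ∀ z ∈ Z, (∀ z' ∈ Z, f z ≤ f z') → r ∉ cov z := by
  intro z hz hopt hrz
  obtain ⟨r', hr', hr'z⟩ := hblock z hz hrz
  have hle := hopt BA hBA
  -- f BA expanded
  have hempty : prevA \ cov BA = ∅ := by
    ext x; simp only [Set.mem_diff, Set.mem_empty_iff_false, iff_false, not_and, not_not]
    exact fun hx => hBAcov hx
  have hfBA : f BA = Pm * ((newR \ cov BA).ncard : ℝ) + g BA := by
    rw [hf, hempty]; simp
  -- bounds
  have h1 : (1 : ℝ) ≤ ((prevA \ cov z).ncard : ℝ) := by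
    have : 0 < (prevA \ cov z).ncard := by
      rw [Set.ncard_pos (Set.toFinite _)]
      exact ⟨r', hr'.1, hr'z⟩
    exact_mod_cast this
  have h2 : ((newR \ cov BA).ncard : ℝ) ≤ (Fintype.card Req : ℝ) := by
    have := Set.ncard_le_ncard (Set.subset_univ (newR \ cov BA)) Set.finite_univ
    rw [Set.ncard_univ, Nat.card_eq_fintype_card] at this
    exact_mod_cast this
  have h3 : g BA - g z ≤ osc := hosc BA hBA z hz
  have h4 : 0 ≤ Pm * ((newR \ cov z).ncard : ℝ) := by positivity
  have hPpK : Pp * 1 ≤ Pp * ((prevA \ cov z).ncard : ℝ) := by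
    have hosc0 : (0 : ℝ) ≤ osc := by have := hosc BA hBA BA hBA; linarith
    have hc0 : (0 : ℝ) ≤ (Fintype.card Req : ℝ) := Nat.cast_nonneg _
    have hPp0 : 0 < Pp := by nlinarith
    nlinarith
  rw [hf z, hfBA] at hle
  nlinarith [mul_le_mul_of_nonneg_left h2 hPm.le]
end

section
/- For an assignment problem where each vehicle may serve at most one bundle, each request belongs to at most one assigned bundle, and the objective rewards assigned requests with reward P⁻ > osc(g), every optimal solution is maximal in the following sense: there is no unassigned request r and no assigned (or empty) bundle b on a feasible vehicle such that inserting r into b yields a feasible assignment. -/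
/-- An assignment of at most one bundle (finite set of requests) per vehicle. -/
def FeasibleAssignment {Veh Req : Type*}
    (F : Finset Req → Veh → Prop) (z : Veh → Option (Finset Req)) : Prop :=
  (∀ v b, z v = some b → F b v) ∧          -- only feasible bundles (z_{bv} ≤ F_{bv})
  (∀ v v' b b', v ≠ v' → z v = some b → z v' = some b' → Disjoint b b')
  -- each request belongs to at most one assigned bundle

/-- Requests covered by an assignment. -/
def CoveredReqs {Veh Req : Type*} (z : Veh → Option (Finset Req)) : Set Req :=
  {a | ∃ v b, z v = some b ∧ a ∈ b}

/-- with per-request reward `P⁻ > osc(g)`, every optimal solution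
of the bundle assignment problem is maximal: no uncovered request can be
inserted, i.e. there is no feasible assignment covering all requests covered by
`z` plus an extra request `r`. -/
theorem optimal_assignment_is_maximal
    {Veh Req : Type*} [Fintype Veh] [Fintype Req]
    (F : Finset Req → Veh → Prop)
    (g : (Veh → Option (Finset Req)) → ℝ) (Pm : ℝ) (hPm : 0 < Pm)
    (hosc : ∀ z z', FeasibleAssignment F z → FeasibleAssignment F z' →
      g z - g z' < Pm)
    (f : (Veh → Option (Finset Req)) → ℝ)
    (hf : ∀ z, f z = -Pm * ((CoveredReqs z).ncard : ℝ) + g z)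
    (z : Veh → Option (Finset Req))
    (hz : FeasibleAssignment F z)
    (hopt : ∀ z', FeasibleAssignment F z' → f z ≤ f z') :
    ¬ ∃ (r : Req) (z' : Veh → Option (Finset Req)),
        r ∉ CoveredReqs z ∧ FeasibleAssignment F z' ∧
        CoveredReqs z ∪ {r} ⊆ CoveredReqs z' := by
  rintro ⟨r, z', hr, hz', hsub⟩
  have hfin : (CoveredReqs z').Finite := Set.toFinite _
  have hfinz : (CoveredReqs z).Finite := Set.toFinite _
  have hss : CoveredReqs z ⊂ CoveredReqs z' := by
    constructor
    · intro x hx; exact hsub (Or.inl hx)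
    · intro hsup
      exact hr (hsup (hsub (Or.inr rfl)))
  have hcard : (CoveredReqs z).ncard + 1 ≤ (CoveredReqs z').ncard := by
    have := Set.ncard_lt_ncard hss hfin
    omega
  have hlt : f z' < f z := by
    rw [hf, hf]
    have h1 : ((CoveredReqs z).ncard : ℝ) + 1 ≤ ((CoveredReqs z').ncard : ℝ) := by
      exact_mod_cast hcard
    have h2 : g z' - g z < Pm := hosc z' z hz' hz
    nlinarith
  exact absurd (hopt z' hz') (not_le.mpr hlt)
end

section
/- The corollary condition for heuristic graph construction is sufficient: if for every later time t' and every feasible assignment B covering r there exists a request r' covered by the time-t optimal assignment B^A(t) but not by B, and B^A(t) remains feasible at t', then under lexicographic priority (covered guaranteed requests first) no optimal assignment at t' covers r — regardless of which subset of feasible assignments the heuristic considers, as long as the considered subset contains B^A(t). -/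
/-- sufficiency of the corollary condition for heuristic graph
construction. If the heuristic's considered subset `Z_h(t') ⊆ Z_full(t')`
contains the previous optimal assignment `B^A(t)`, all requests covered by
`B^A(t)` are guaranteed at `t'`, and every considered assignment covering `r`
drops some request covered by `B^A(t)`, then no lexicographically
(guaranteed-coverage, new-coverage) optimal assignment over `Z_h(t')` covers
`r`. -/
theorem heuristic_corollary_condition_sufficient
    {ι Req : Type*} [Fintype Req]
    (Zfull Zh : Set ι)                 -- all feasible / heuristically considered
    (hsub : Zh ⊆ Zfull)
    (cov : ι → Set Req)
    (Grt New : Set Req)                -- guaranteed and new requests at t'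
    (BA : ι) (hBA : Zh BA)             -- B^A(t) is considered by the heuristic
    (hguar : cov BA ⊆ Grt)             -- covered requests of B^A(t) are guaranteed
    (hGcov : Grt ⊆ cov BA)             -- B^A(t) covers every guaranteed request
    (r : Req) (hrNew : r ∈ New) (hrBA : r ∉ cov BA)
    (hblock : ∀ B ∈ Zh, r ∈ cov B → ∃ r' ∈ cov BA, r' ∉ cov B) :
    ∀ B ∈ Zh,
      (∀ B' ∈ Zh,
        ((Grt ∩ cov B').ncard < (Grt ∩ cov B).ncard ∨
          ((Grt ∩ cov B').ncard = (Grt ∩ cov B).ncard ∧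
            (New ∩ cov B').ncard ≤ (New ∩ cov B).ncard))) →
      r ∉ cov B := by
  intro B hB hopt hrB
  obtain ⟨r', hr'BA, hr'B⟩ := hblock B hB hrB
  have hss : Grt ∩ cov B ⊂ Grt ∩ cov BA := by
    constructor
    · intro x hx
      exact ⟨hx.1, hGcov hx.1⟩
    · intro h
      exact hr'B (h ⟨hguar hr'BA, hr'BA⟩).2
  have hlt : (Grt ∩ cov B).ncard < (Grt ∩ cov BA).ncard :=
    Set.ncard_lt_ncard hss (Set.toFinite _)
  rcases hopt BA hBA with h | ⟨h, _⟩ <;> omega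
end
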